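/- Let A, B be n×n positive definite complex matrices, τ ∈ (0,1) and t ∈ (0,1). If t ≤ min{τ, 1-τ} or t ≥ max{τ, 1-τ}, then !_t(A,B) + (t(1-t)/(τ(1-τ)))·(A ∇ B - !_τ(A,B)) ≤ A ∇ B in the Loewner order. If instead min{τ, 1-τ} ≤ t ≤ max{τ, 1-τ}, the reverse Loewner inequality holds. -/

import Mathlib

open Matrix ComplexOrder

/-- The weighted matrix harmonic mean `A !_t B = ((1-t)A⁻¹ + tB⁻¹)⁻¹`. -/
noncomputable def mharm {n : ℕ} (t : ℝ) (A B : Matrix (Fin n) (Fin n) ℂ) :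
    Matrix (Fin n) (Fin n) ℂ :=
  (((1 - t : ℝ) : ℂ) • A⁻¹ + ((t : ℝ) : ℂ) • B⁻¹)⁻¹

/-- The harmonic Heinz matrix mean `!_t(A,B) = (A !_t B + A !_{1-t} B)/2`. -/
noncomputable def mheinz {n : ℕ} (t : ℝ) (A B : Matrix (Fin n) (Fin n) ℂ) :
    Matrix (Fin n) (Fin n) ℂ :=
  (2 : ℂ)⁻¹ • (mharm t A B + mharm (1 - t) A B)

/-- The matrix arithmetic mean `A ∇ B = (A + B)/2`. -/
noncomputable def marith {n : ℕ} (A B : Matrix (Fin n) (Fin n) ℂ) :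
    Matrix (Fin n) (Fin n) ℂ :=
  (2 : ℂ)⁻¹ • (A + B)

/-!
Conjugating `A` and `B` by an invertible `C` conjugates `A !_t B`, `A ∇ B` and hence the whole
defect `A ∇ B - (!_t(A,B) + κ (A ∇ B - !_τ(A,B)))` by `C`. Simultaneous diagonalisation
`A = C Cᴴ`, `B = C D Cᴴ` with `D` positive diagonal reduces the defect to the diagonal matrix of
scalar defects at `(1, dᵢ)`. For scalars `a, b > 0` the defect factors as
`(t - τ)(t - (1 - τ))` times a nonnegative rational function, and the sign of
`(t - τ)(t - (1 - τ))` is exactly what separates the two ranges of `t`.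
-/

theorem one_sub_mul_add_mul_pos {t a b : ℝ} (ht : t ∈ Set.Icc (0 : ℝ) 1) (ha : 0 < a)
    (hb : 0 < b) : 0 < (1 - t) * a + t * b := by
  simpa using convex_Ioi (0 : ℝ) ha hb (sub_nonneg.2 ht.2) ht.1 (sub_add_cancel 1 t)

namespace Real

noncomputable def harm (t a b : ℝ) : ℝ := ((1 - t) * a⁻¹ + t * b⁻¹)⁻¹

noncomputable def heinzDefect (t τ a b : ℝ) : ℝ :=
  (a + b) / 2 - ((harm t a b + harm (1 - t) a b) / 2 +
    t * (1 - t) / (τ * (1 - τ)) * ((a + b) / 2 - (harm τ a b + harm (1 - τ) a b) / 2))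

theorem harm_eq (t : ℝ) {a b : ℝ} (ha : a ≠ 0) (hb : b ≠ 0) :
    harm t a b = a * b / ((1 - t) * b + t * a) := by
  rw [harm, ← div_eq_mul_inv, ← div_eq_mul_inv, div_add_div _ _ ha hb, inv_div, mul_comm a t]

theorem heinzDefect_eq {t τ a b : ℝ} (ht : t ∈ Set.Ioo (0 : ℝ) 1) (hτ : τ ∈ Set.Ioo (0 : ℝ) 1)
    (ha : 0 < a) (hb : 0 < b) :
    heinzDefect t τ a b = (t - τ) * (t - (1 - τ)) * (t * (1 - t) * (b - a) ^ 4 * (a + b) /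
      (2 * ((1 - t) * b + t * a) * ((1 - t) * a + t * b) * ((1 - τ) * b + τ * a) *
        ((1 - τ) * a + τ * b))) := by
  obtain ⟨ht₀, ht₁⟩ := ht
  obtain ⟨hτ₀, hτ₁⟩ := hτ
  have ht' : 0 < 1 - t := by linarith
  have hτ' : 0 < 1 - τ := by linarith
  simp only [heinzDefect, harm_eq _ ha.ne' hb.ne', sub_sub_cancel]
  field_simp
  ring

theorem exists_heinzDefect_eq_mul {t τ a b : ℝ} (ht : t ∈ Set.Ioo (0 : ℝ) 1)
    (hτ : τ ∈ Set.Ioo (0 : ℝ) 1) (ha : 0 < a) (hb : 0 < b) :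
    ∃ q, 0 ≤ q ∧ heinzDefect t τ a b = (t - τ) * (t - (1 - τ)) * q := by
  refine ⟨_, ?_, heinzDefect_eq ht hτ ha hb⟩
  obtain ⟨ht₀, ht₁⟩ := ht
  obtain ⟨hτ₀, hτ₁⟩ := hτ
  have ht' : 0 ≤ 1 - t := by linarith
  have hτ' : 0 ≤ 1 - τ := by linarith
  positivity

end Real

variable {n : ℕ}

theorem inv_conjTranspose_inv_mul_mul_inv {S : Matrix (Fin n) (Fin n) ℂ} (hS : IsUnit S)
    (A : Matrix (Fin n) (Fin n) ℂ) : ((Sᴴ)⁻¹ * A * S⁻¹)⁻¹ = S * A⁻¹ * Sᴴ := by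
  rw [Matrix.mul_inv_rev, Matrix.mul_inv_rev,
    nonsing_inv_nonsing_inv _ ((isUnit_iff_isUnit_det _).mp hS),
    nonsing_inv_nonsing_inv Sᴴ ((isUnit_iff_isUnit_det _).mp hS.star), Matrix.mul_assoc]

theorem mharm_conj {S : Matrix (Fin n) (Fin n) ℂ} (hS : IsUnit S) (t : ℝ)
    (A B : Matrix (Fin n) (Fin n) ℂ) :
    mharm t (S * A * Sᴴ) (S * B * Sᴴ) = S * mharm t A B * Sᴴ := by
  rw [mharm, mharm, ← inv_conjTranspose_inv_mul_mul_inv hS]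
  congr 1
  simp only [Matrix.mul_inv_rev, Matrix.mul_add, Matrix.add_mul, Matrix.mul_smul,
    Matrix.smul_mul, Matrix.mul_assoc]

theorem inv_diagonal_of_ne_zero {ι K : Type*} [Fintype ι] [DecidableEq ι] [Field K]
    {v : ι → K} (hv : ∀ i, v i ≠ 0) : (diagonal v)⁻¹ = diagonal fun i => (v i)⁻¹ := by
  refine inv_eq_right_inv ?_
  rw [diagonal_mul_diagonal, ← diagonal_one]
  exact congrArg diagonal (funext fun i => mul_inv_cancel₀ (hv i))

theorem mharm_diagonal {t : ℝ} (ht : t ∈ Set.Icc (0 : ℝ) 1) {a b : Fin n → ℝ}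
    (ha : ∀ i, 0 < a i) (hb : ∀ i, 0 < b i) :
    mharm t (diagonal fun i => (a i : ℂ)) (diagonal fun i => (b i : ℂ)) =
      diagonal fun i => (Real.harm t (a i) (b i) : ℂ) := by
  have hsum : ∀ i, 0 < (1 - t) * (a i)⁻¹ + t * (b i)⁻¹ := fun i =>
    one_sub_mul_add_mul_pos ht (inv_pos.2 (ha i)) (inv_pos.2 (hb i))
  rw [mharm, inv_diagonal_of_ne_zero fun i => Complex.ofReal_ne_zero.2 (ha i).ne',
    inv_diagonal_of_ne_zero fun i => Complex.ofReal_ne_zero.2 (hb i).ne', ← diagonal_smul,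
    ← diagonal_smul, diagonal_add]
  simp only [Pi.smul_apply, smul_eq_mul]
  rw [inv_diagonal_of_ne_zero fun i => by exact_mod_cast (hsum i).ne']
  simp [Real.harm]

noncomputable def heinzDefect (t τ : ℝ) (A B : Matrix (Fin n) (Fin n) ℂ) :
    Matrix (Fin n) (Fin n) ℂ :=
  marith A B -
    (mheinz t A B + ((t * (1 - t) / (τ * (1 - τ)) : ℝ) : ℂ) • (marith A B - mheinz τ A B))

theorem heinzDefect_conj {S : Matrix (Fin n) (Fin n) ℂ} (hS : IsUnit S) (t τ : ℝ)
    (A B : Matrix (Fin n) (Fin n) ℂ) :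
    heinzDefect t τ (S * A * Sᴴ) (S * B * Sᴴ) = S * heinzDefect t τ A B * Sᴴ := by
  simp only [heinzDefect, mheinz, marith, mharm_conj hS, Matrix.mul_add, Matrix.add_mul,
    Matrix.mul_sub, Matrix.sub_mul, Matrix.mul_smul, Matrix.smul_mul]

theorem heinzDefect_diagonal {t τ : ℝ} (ht : t ∈ Set.Icc (0 : ℝ) 1)
    (hτ : τ ∈ Set.Icc (0 : ℝ) 1) {a b : Fin n → ℝ} (ha : ∀ i, 0 < a i) (hb : ∀ i, 0 < b i) :
    heinzDefect t τ (diagonal fun i => (a i : ℂ)) (diagonal fun i => (b i : ℂ)) =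
      diagonal fun i => (Real.heinzDefect t τ (a i) (b i) : ℂ) := by
  have ht' : 1 - t ∈ Set.Icc (0 : ℝ) 1 := ⟨by linarith [ht.2], by linarith [ht.1]⟩
  have hτ' : 1 - τ ∈ Set.Icc (0 : ℝ) 1 := ⟨by linarith [hτ.2], by linarith [hτ.1]⟩
  simp only [heinzDefect, mheinz, marith, mharm_diagonal ht ha hb, mharm_diagonal ht' ha hb,
    mharm_diagonal hτ ha hb, mharm_diagonal hτ' ha hb, diagonal_add, ← diagonal_smul,
    diagonal_sub]
  congr 1
  ext i
  simp [Real.heinzDefect]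
  ring

open scoped MatrixOrder in
theorem exists_isUnit_conj_one_and_conj_diagonal {A B : Matrix (Fin n) (Fin n) ℂ}
    (hA : A.PosDef) (hB : B.PosDef) :
    ∃ C : Matrix (Fin n) (Fin n) ℂ, IsUnit C ∧ ∃ d : Fin n → ℝ, (∀ i, 0 < d i) ∧
      A = C * 1 * Cᴴ ∧ B = C * diagonal (fun i => (d i : ℂ)) * Cᴴ := by
  obtain ⟨S, hS, rfl⟩ :=
    CStarAlgebra.isStrictlyPositive_iff_eq_mul_star_self.mp hA.isStrictlyPositive
  have hSdet : IsUnit S.det := (isUnit_iff_isUnit_det S).mp hS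
  set Y := S⁻¹ * B * star S⁻¹
  have hY : Y.PosDef :=
    ((isUnit_nonsing_inv_iff).mpr hS).posDef_star_right_conjugate_iff.mpr hB
  have hBY : B = S * Y * star S := by
    simp only [Y, ← Matrix.mul_assoc, mul_nonsing_inv _ hSdet, Matrix.one_mul]
    rw [Matrix.mul_assoc, star_eq_conjTranspose, conjTranspose_nonsing_inv,
      ← star_eq_conjTranspose, nonsing_inv_mul _ ((isUnit_iff_isUnit_det _).mp hS.star),
      Matrix.mul_one]
  set U := hY.1.eigenvectorUnitary
  obtain ⟨d, hd, hYd⟩ : ∃ d : Fin n → ℝ, (∀ i, 0 < d i) ∧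
      Y = U * diagonal (fun i => (d i : ℂ)) * star (U : Matrix (Fin n) (Fin n) ℂ) :=
    ⟨_, hY.eigenvalues_pos, hY.1.spectral_theorem⟩
  refine ⟨S * U, hS.mul Unitary.isUnit_coe, d, hd, ?_, ?_⟩
  · rw [Matrix.mul_one, conjTranspose_mul, Matrix.mul_assoc S,
      ← Matrix.mul_assoc (U : Matrix (Fin n) (Fin n) ℂ), ← star_eq_conjTranspose,
      Matrix.mem_unitaryGroup_iff.mp U.2, Matrix.one_mul, star_eq_conjTranspose]
  · rw [hBY, hYd]
    simp only [conjTranspose_mul, star_eq_conjTranspose, Matrix.mul_assoc]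

theorem exists_posSemidef_heinzDefect_eq_smul {A B : Matrix (Fin n) (Fin n) ℂ}
    (hA : A.PosDef) (hB : B.PosDef) {t τ : ℝ} (ht : t ∈ Set.Ioo (0 : ℝ) 1)
    (hτ : τ ∈ Set.Ioo (0 : ℝ) 1) :
    ∃ P : Matrix (Fin n) (Fin n) ℂ, P.PosSemidef ∧
      heinzDefect t τ A B = (((t - τ) * (t - (1 - τ)) : ℝ) : ℂ) • P := by
  obtain ⟨C, hC, d, hd, rfl, rfl⟩ := exists_isUnit_conj_one_and_conj_diagonal hA hB
  choose q hq hdefect using fun i => Real.exists_heinzDefect_eq_mul ht hτ one_pos (hd i)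
  refine ⟨C * diagonal (fun i => (q i : ℂ)) * Cᴴ,
    (posSemidef_diagonal_iff.2 fun i => by exact_mod_cast hq i).mul_mul_conjTranspose_same C, ?_⟩
  have hone : (1 : Matrix (Fin n) (Fin n) ℂ) = diagonal fun _ => ((1 : ℝ) : ℂ) := by simp
  have hdiag : (diagonal fun i => (Real.heinzDefect t τ 1 (d i) : ℂ)) =
      (((t - τ) * (t - (1 - τ)) : ℝ) : ℂ) • diagonal fun i => (q i : ℂ) := by
    rw [← diagonal_smul]
    exact congrArg diagonal (funext fun i => by simp [hdefect])
  rw [hone, heinzDefect_conj hC, heinzDefect_diagonal (Set.Ioo_subset_Icc_self ht)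
    (Set.Ioo_subset_Icc_self hτ) (fun _ => one_pos) hd, hdiag, mul_smul_comm, smul_mul_assoc]

theorem mul_sub_nonneg_of_le_min_or_max_le {t τ : ℝ}
    (h : t ≤ min τ (1 - τ) ∨ t ≥ max τ (1 - τ)) : 0 ≤ (t - τ) * (t - (1 - τ)) := by
  rcases h with h | h
  · exact mul_nonneg_of_nonpos_of_nonpos (by linarith [min_le_left τ (1 - τ)])
      (by linarith [min_le_right τ (1 - τ)])
  · exact mul_nonneg (by linarith [le_max_left τ (1 - τ)]) (by linarith [le_max_right τ (1 - τ)])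

theorem mul_sub_nonpos_of_min_le_of_le_max {t τ : ℝ}
    (h : min τ (1 - τ) ≤ t ∧ t ≤ max τ (1 - τ)) : (t - τ) * (t - (1 - τ)) ≤ 0 := by
  rcases le_total τ (1 - τ) with hτ | hτ
  · rw [min_eq_left hτ, max_eq_right hτ] at h
    exact mul_nonpos_of_nonneg_of_nonpos (by linarith) (by linarith)
  · rw [min_eq_right hτ, max_eq_left hτ] at h
    exact mul_nonpos_of_nonpos_of_nonneg (by linarith) (by linarith)

theorem stmt_17 {n : ℕ} (A B : Matrix (Fin n) (Fin n) ℂ)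
    (hA : A.PosDef) (hB : B.PosDef) (τ t : ℝ)
    (hτ : τ ∈ Set.Ioo (0 : ℝ) 1) (ht : t ∈ Set.Ioo (0 : ℝ) 1) :
    ((t ≤ min τ (1 - τ) ∨ t ≥ max τ (1 - τ)) →
      (marith A B -
        (mheinz t A B +
          ((t * (1 - t) / (τ * (1 - τ)) : ℝ) : ℂ) • (marith A B - mheinz τ A B))).PosSemidef) ∧
    ((min τ (1 - τ) ≤ t ∧ t ≤ max τ (1 - τ)) →
      ((mheinz t A B +
          ((t * (1 - t) / (τ * (1 - τ)) : ℝ) : ℂ) • (marith A B - mheinz τ A B)) -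
        marith A B).PosSemidef) := by
  obtain ⟨P, hP, hdefect⟩ := exists_posSemidef_heinzDefect_eq_smul hA hB ht hτ
  refine ⟨fun h => ?_, fun h => ?_⟩
  · change (heinzDefect t τ A B).PosSemidef
    rw [hdefect]
    exact hP.smul (Complex.zero_le_real.2 (mul_sub_nonneg_of_le_min_or_max_le h))
  · rw [← neg_sub, show marith A B - _ = heinzDefect t τ A B from rfl, hdefect, ← neg_smul,
      ← Complex.ofReal_neg]
    exact hP.smul (Complex.zero_le_real.2 (neg_nonneg.2 (mul_sub_nonpos_of_min_le_of_le_max h)))
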